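/- Let ε > 0, let π̄ ∈ (0,1), and suppose that for every t̄ > t₋good one has ν_T((t₋good, t̄]) > 0 and ν_F((t₋good, t̄]) ≤ ε·ν_T((t₋good, t̄]), and also ν_T((t₋good, ∞)) > 0 and ν_F((t₋good, ∞)) ≤ ε·ν_T((t₋good, ∞)). Then for every π_F ∈ [0, π̄] and every t̄ > t₋good, |G(π_F, t̄)/G_T(t̄) − 1| ≤ (π̄/(1−π̄))·ε, where G_T(t̄) := ν_T((t₋good, t̄])/ν_T((t₋good, ∞)). (General version of Proposition 3 for an arbitrary upper bound π̄ on the share of false factors.) -/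

import Mathlib

open MeasureTheory

/-- The mixture measure ν_π := π·ν_F + (1−π)·ν_T. -/
noncomputable def mixMeasure (νF νT : Measure ℝ) (π : ℝ) : Measure ℝ :=
  ENNReal.ofReal π • νF + ENNReal.ofReal (1 - π) • νT

/-- Conditional distribution function of well-observed t-statistics:
G(π, t̄) := ν_π((t_good, t̄]) / ν_π((t_good, ∞)). -/
noncomputable def condCDF' (νF νT : Measure ℝ) (tgood π tbar : ℝ) : ℝ :=
  ((mixMeasure νF νT π) (Set.Ioc tgood tbar)).toReal /
    ((mixMeasure νF νT π) (Set.Ioi tgood)).toReal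

/-- Conditional distribution function of well-observed t-statistics assuming
all factors are true: G_T(t̄) := ν_T((t_good, t̄]) / ν_T((t_good, ∞)). -/
noncomputable def condCDFTrue (νT : Measure ℝ) (tgood tbar : ℝ) : ℝ :=
  (νT (Set.Ioc tgood tbar)).toReal / (νT (Set.Ioi tgood)).toReal

/-!
Write `a, A` for the `ν_T`-masses of `(t_good, t̄]` and `(t_good, ∞)` and `b, B` for the
`ν_F`-masses. Then `G(π, t̄) / G_T(t̄) - 1 = π (A b - a B) / ((π B + (1 - π) A) a)`.
Both `A b` and `a B` lie in `[0, ε a A]`, so the numerator is at most `π ε a A` in absolute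
value, while the denominator is at least `(1 - π) A a`; this gives the bound `π / (1 - π) · ε`,
which is increasing in `π`.
-/

theorem mixMeasure_apply_toReal (νF νT : Measure ℝ) [IsFiniteMeasure νF] [IsFiniteMeasure νT]
    {π : ℝ} (hπ0 : 0 ≤ π) (hπ1 : π ≤ 1) (s : Set ℝ) :
    (mixMeasure νF νT π s).toReal = π * (νF s).toReal + (1 - π) * (νT s).toReal := by
  rw [mixMeasure, Measure.add_apply, Measure.smul_apply, Measure.smul_apply, smul_eq_mul,
    smul_eq_mul, ENNReal.toReal_add (by finiteness) (by finiteness), ENNReal.toReal_mul,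
    ENNReal.toReal_mul, ENNReal.toReal_ofReal hπ0, ENNReal.toReal_ofReal (by linarith)]

theorem abs_mul_sub_mul_le {a A b B ε : ℝ} (ha : 0 ≤ a) (hA : 0 ≤ A) (hb0 : 0 ≤ b)
    (hB0 : 0 ≤ B) (hb : b ≤ ε * a) (hB : B ≤ ε * A) :
    |A * b - a * B| ≤ ε * a * A := by
  rw [abs_le]
  constructor <;> nlinarith

theorem mixture_ratio_div_sub_one {p a A b B : ℝ} (ha : a ≠ 0)
    (hD : p * B + (1 - p) * A ≠ 0) :
    (p * b + (1 - p) * a) / (p * B + (1 - p) * A) / (a / A) - 1 =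
      p * (A * b - a * B) / ((p * B + (1 - p) * A) * a) := by
  field_simp
  ring

theorem abs_mixture_ratio_div_sub_one_le {p a A b B ε : ℝ} (hp0 : 0 ≤ p) (hp1 : p < 1)
    (ha : 0 < a) (hA : 0 < A) (hb0 : 0 ≤ b) (hB0 : 0 ≤ B) (hb : b ≤ ε * a) (hB : B ≤ ε * A) :
    |(p * b + (1 - p) * a) / (p * B + (1 - p) * A) / (a / A) - 1| ≤ p / (1 - p) * ε := by
  have hq : 0 < 1 - p := by linarith
  have hD : (1 - p) * A ≤ p * B + (1 - p) * A := le_add_of_nonneg_left (by positivity)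
  have hD0 : 0 < p * B + (1 - p) * A := lt_of_lt_of_le (by positivity) hD
  rw [mixture_ratio_div_sub_one ha.ne' hD0.ne', abs_div, abs_mul, abs_of_nonneg hp0,
    abs_of_pos (mul_pos hD0 ha), div_le_iff₀ (mul_pos hD0 ha)]
  calc p * |A * b - a * B| ≤ p * (ε * a * A) :=
        mul_le_mul_of_nonneg_left (abs_mul_sub_mul_le ha.le hA.le hb0 hB0 hb hB) hp0
    _ = p / (1 - p) * ε * ((1 - p) * A * a) := by field_simp
    _ ≤ p / (1 - p) * ε * ((p * B + (1 - p) * A) * a) := by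
        have hε : 0 ≤ ε := nonneg_of_mul_nonneg_left (hB0.trans hB) hA
        gcongr

theorem div_one_sub_le_div_one_sub {p q : ℝ} (hp : 0 ≤ p) (hpq : p ≤ q) (hq : q < 1) :
    p / (1 - p) ≤ q / (1 - q) :=
  div_le_div₀ (hp.trans hpq) hpq (by linarith) (by linarith)

theorem strong_identification_general_general
    (νF νT : Measure ℝ) [IsProbabilityMeasure νF] [IsProbabilityMeasure νT]
    (tgood : ℝ)
    (ε : ℝ) (πbar : ℝ) (hπbar : πbar ∈ Set.Ioo (0 : ℝ) 1)
    (hIoc : ∀ tbar : ℝ, tgood < tbar →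
      0 < (νT (Set.Ioc tgood tbar)).toReal ∧
      (νF (Set.Ioc tgood tbar)).toReal ≤ ε * (νT (Set.Ioc tgood tbar)).toReal)
    (hIoiT : 0 < (νT (Set.Ioi tgood)).toReal)
    (hIoiF : (νF (Set.Ioi tgood)).toReal ≤ ε * (νT (Set.Ioi tgood)).toReal) :
    ∀ πF : ℝ, πF ∈ Set.Icc (0 : ℝ) πbar →
      ∀ tbar : ℝ, tgood < tbar →
        |condCDF' νF νT tgood πF tbar / condCDFTrue νT tgood tbar - 1| ≤ (πbar / (1 - πbar)) * ε := by
  rintro πF ⟨hπF0, hπFπbar⟩ tbar htbar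
  have hπF1 : πF < 1 := hπFπbar.trans_lt hπbar.2
  obtain ⟨hIocT, hIocF⟩ := hIoc tbar htbar
  have hε : 0 ≤ ε := nonneg_of_mul_nonneg_left (ENNReal.toReal_nonneg.trans hIoiF) hIoiT
  rw [condCDF', mixMeasure_apply_toReal νF νT hπF0 hπF1.le,
    mixMeasure_apply_toReal νF νT hπF0 hπF1.le, condCDFTrue]
  calc _ ≤ πF / (1 - πF) * ε :=
        abs_mixture_ratio_div_sub_one_le hπF0 hπF1 hIocT hIoiT ENNReal.toReal_nonneg
          ENNReal.toReal_nonneg hIocF hIoiF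
    _ ≤ πbar / (1 - πbar) * ε :=
        mul_le_mul_of_nonneg_right (div_one_sub_le_div_one_sub hπF0 hπFπbar hπbar.2) hε

/-- Proposition 3 (Strongly Identified Parameters): the model's predictions
about well-observed t-statistics are within a factor (π̄/(1−π̄))·ε of the predictions
obtained by assuming all factors are true. -/
theorem strong_identification_general
    (νF νT : Measure ℝ) [IsProbabilityMeasure νF] [IsProbabilityMeasure νT]
    (hνFsupp : νF (Set.Iio 0) = 0) (hνTsupp : νT (Set.Iio 0) = 0)
    (tgood : ℝ) (htgood : 0 < tgood)
    (ε : ℝ) (hε : 0 < ε) (πbar : ℝ) (hπbar : πbar ∈ Set.Ioo (0 : ℝ) 1)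
    (hIoc : ∀ tbar : ℝ, tgood < tbar →
      0 < (νT (Set.Ioc tgood tbar)).toReal ∧
      (νF (Set.Ioc tgood tbar)).toReal ≤ ε * (νT (Set.Ioc tgood tbar)).toReal)
    (hIoiT : 0 < (νT (Set.Ioi tgood)).toReal)
    (hIoiF : (νF (Set.Ioi tgood)).toReal ≤ ε * (νT (Set.Ioi tgood)).toReal) :
    ∀ πF : ℝ, πF ∈ Set.Icc (0 : ℝ) πbar →
      ∀ tbar : ℝ, tgood < tbar →
        |condCDF' νF νT tgood πF tbar / condCDFTrue νT tgood tbar - 1| ≤ (πbar / (1 - πbar)) * ε :=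
  strong_identification_general_general νF νT tgood ε πbar hπbar hIoc hIoiT hIoiF
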